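/- arXiv:1212.5945 — 5 statements merged into one kernel-verified Lean document; each statement's English description precedes it below -/
import Mathlib

section
/- Let H be a real Hilbert space, D ⊆ H a convex set with nonempty interior, and f : H → ℝ a lower-semicontinuous function that is strictly convex and totally convex on D and Gâteaux differentiable on the interior of D with Gâteaux gradient g. Let p ≥ 2 and let A_1, …, A_p (indices taken modulo p) be nonempty, bounded, closed, convex subsets of the interior of D, and let T : ∪_i A_i → ∪_i A_i satisfy T(A_i) ⊆ A_{i+1} for each i. Assume T is a generalized point-dependent (K,λ)-hybrid p-cyclic self-mapping relative to the Bregman distance D_f, with λ bounded and with K̂(y) := ∏_{j=i}^{i+p−1} K_j(T^{j−i} y) < 1 for every y ∈ A_{i+1} and every i. Assume moreover that for some x₀ ∈ ∪_i A_i the sequence of iterates (Tⁿ x₀) converges in norm to some z ∈ ∩_i A_i. Then z = Tz, z is the unique fixed point of T, and for every x ∈ ∪_i A_i the sequence (Tⁿ x) converges in norm to z. -/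
/-!
Since `f` is convex, lower semicontinuous and finite on a Hilbert space, it is continuous on the
interior of `D` (Baire), so `D_f(Tⁿx₀, z) → 0`. Feeding `x = Tⁿx₀`, `y = z` into the hybrid
inequality and passing to the limit with the three-point identity gives `D_f(z, Tz) ≤ 0`, hence
`Tz = z` by total convexity. Once `z` is fixed, the hybrid inequality with `y = z` loses its
`λ`-term and reads `D_f(Tⁿ⁺¹x, z) ≤ K(z) D_f(Tⁿx, z)`; over a full cycle the factors multiply to
`K̂(z) < 1`, so `D_f(Tⁿx, z) → 0`, and total convexity turns this into `Tⁿx → z`.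
-/

open Topology Filter Finset

lemma tendsto_zero_of_apply_add_le_mul {d : ℕ → ℝ} {p : ℕ} {κ : ℝ} (hp : 0 < p) (hκ₀ : 0 ≤ κ)
    (hκ : κ < 1) (hd : ∀ n, 0 ≤ d n) (h : ∀ n, d (n + p) ≤ κ * d n) :
    Tendsto d atTop (𝓝 0) := by
  have hq : ∀ q r, d (q * p + r) ≤ κ ^ q * d r := by
    intro q r
    induction q with
    | zero => simp
    | succ q ih =>
      calc d ((q + 1) * p + r) = d (q * p + r + p) := by ring_nf
        _ ≤ κ * d (q * p + r) := h _
        _ ≤ κ * (κ ^ q * d r) := by gcongr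
        _ = κ ^ (q + 1) * d r := by ring
  set M := ∑ r ∈ range p, d r
  have hbound : ∀ n, d n ≤ κ ^ (n / p) * M := fun n => calc
    d n = d (n / p * p + n % p) := by rw [Nat.div_add_mod']
    _ ≤ κ ^ (n / p) * d (n % p) := hq _ _
    _ ≤ κ ^ (n / p) * M := by
      gcongr
      exact single_le_sum (fun r _ => hd r) (mem_range.mpr (Nat.mod_lt n hp))
  have hpow : Tendsto (fun n => κ ^ (n / p) * M) atTop (𝓝 0) := by
    simpa using ((tendsto_pow_atTop_nhds_zero_of_lt_one hκ₀ hκ).comp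
      (Nat.tendsto_div_const_atTop hp.ne')).mul_const M
  exact squeeze_zero hd hbound hpow

lemma apply_add_le_prod_range_mul {d k : ℕ → ℝ} (hk : ∀ n, 0 ≤ k n)
    (h : ∀ n, d (n + 1) ≤ k n * d n) (n m : ℕ) :
    d (n + m) ≤ (∏ l ∈ range m, k (n + l)) * d n := by
  induction m with
  | zero => simp
  | succ m ih =>
    calc d (n + (m + 1)) ≤ k (n + m) * d (n + m) := h (n + m)
      _ ≤ k (n + m) * ((∏ l ∈ range m, k (n + l)) * d n) := by gcongr; exact hk _
      _ = (∏ l ∈ range (m + 1), k (n + l)) * d n := by rw [prod_range_succ]; ring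

lemma tendsto_zero_of_apply_succ_le_mul {d k : ℕ → ℝ} {p : ℕ} {κ : ℝ} (hp : 0 < p)
    (hκ : κ < 1) (hk : ∀ n, 0 ≤ k n) (hd : ∀ n, 0 ≤ d n) (h : ∀ n, d (n + 1) ≤ k n * d n)
    (hwin : ∀ n, ∏ l ∈ range p, k (n + l) ≤ κ) :
    Tendsto d atTop (𝓝 0) :=
  tendsto_zero_of_apply_add_le_mul hp ((prod_nonneg fun _ _ => hk _).trans (hwin 0)) hκ hd
    fun n => (apply_add_le_prod_range_mul hk h n p).trans
      (mul_le_mul_of_nonneg_right (hwin n) (hd n))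

lemma iterate_mem_of_mapsTo_add_one {ι H : Type*} [AddMonoidWithOne ι] {A : ι → Set H}
    {T : H → H} (hT : ∀ i, Set.MapsTo T (A i) (A (i + 1))) {i : ι} {x : H} (hx : x ∈ A i)
    (n : ℕ) : T^[n] x ∈ A (i + n) := by
  induction n with
  | zero => simpa using hx
  | succ n ih =>
    rw [Function.iterate_succ_apply', Nat.cast_succ, ← add_assoc]
    exact hT _ ih

lemma ConvexOn.continuousOn_interior_of_lowerSemicontinuous {E : Type*} [NormedAddCommGroup E]
    [NormedSpace ℝ E] [CompleteSpace E] {C : Set E} {f : E → ℝ} (hf : ConvexOn ℝ C f)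
    (hlsc : LowerSemicontinuous f) : ContinuousOn f (interior C) := by
  obtain hC | hC := (interior C).eq_empty_or_nonempty
  · simp [hC]
  have hcover : ⋃ n : ℕ, {x | f x ≤ n} = Set.univ :=
    Set.eq_univ_of_forall fun x => Set.mem_iUnion.mpr ⟨⌈f x⌉₊, Nat.le_ceil (f x)⟩
  obtain ⟨x₀, hx₀C, hx₀⟩ := (dense_iUnion_interior_of_closed
    (fun n : ℕ => hlsc.isClosed_preimage n) hcover).inter_open_nonempty _ isOpen_interior hC
  obtain ⟨n, hn⟩ := Set.mem_iUnion.mp hx₀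
  have hbdd : ∃ x ∈ interior C, (𝓝 x).IsBoundedUnder (· ≤ ·) f :=
    ⟨x₀, hx₀C, n, mem_interior_iff_mem_nhds.mp hn⟩
  -- a convex function bounded above near one point of an open convex set is continuous on it
  exact ((hf.subset interior_subset hf.1.interior).continuousOn_tfae isOpen_interior hC).out 3 1
    |>.mp hbdd

section Bregman

variable {H : Type*} [NormedAddCommGroup H] [InnerProductSpace ℝ H]

def bregmanDist (f : H → ℝ) (g : H → H) (y x : H) : ℝ :=
  f y - f x - inner ℝ (y - x) (g x)

def IsTotallyConvexAt (f : H → ℝ) (g : H → H) (D : Set H) (z : H) : Prop :=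
  ∀ t : ℝ, 0 < t → ∃ c : ℝ, 0 < c ∧ ∀ y ∈ D, ‖y - z‖ = t → c ≤ bregmanDist f g z y

variable {f : H → ℝ} {g : H → H} {D : Set H}

lemma bregmanDist_add_bregmanDist_add_inner (x w y : H) :
    bregmanDist f g x w + bregmanDist f g w y + inner ℝ (x - w) (g w - g y) =
      bregmanDist f g x y := by
  simp only [bregmanDist, inner_sub_left, inner_sub_right]
  ring

lemma bregmanDist_add_bregmanDist_swap (x y : H) :
    bregmanDist f g x y + bregmanDist f g y x = inner ℝ (x - y) (g x - g y) := by
  simp only [bregmanDist, inner_sub_left, inner_sub_right]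
  ring

lemma bregmanDist_nonneg (hf : ConvexOn ℝ D f) {x y : H} (hx : x ∈ D) (hy : y ∈ D)
    (hg : Tendsto (fun t : ℝ => (f (x + t • (y - x)) - f x) / t) (𝓝[>] 0)
      (𝓝 (inner ℝ (y - x) (g x)))) :
    0 ≤ bregmanDist f g y x := by
  have hslope : ∀ᶠ t in 𝓝[>] (0 : ℝ), (f (x + t • (y - x)) - f x) / t ≤ f y - f x := by
    filter_upwards [Ioo_mem_nhdsGT one_pos] with t ⟨ht₀, ht₁⟩
    have hcvx := hf.2 hx hy (sub_nonneg.mpr ht₁.le) ht₀.le (sub_add_cancel 1 t)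
    rw [show (1 - t) • x + t • y = x + t • (y - x) by module, smul_eq_mul, smul_eq_mul] at hcvx
    rw [div_le_iff₀ ht₀]
    linarith
  have := le_of_tendsto hg hslope
  rw [bregmanDist]
  linarith

lemma bregmanDist_nonpos_of_tendsto {u : ℕ → H} {z w : H} {κ c : ℝ}
    (hu : Tendsto u atTop (𝓝 z)) (hd : Tendsto (fun n => bregmanDist f g (u n) z) atTop (𝓝 0))
    (hd₀ : ∀ n, 0 ≤ bregmanDist f g (u (n + 1)) z)
    (h : ∀ n, bregmanDist f g (u (n + 1)) w ≤
      κ * bregmanDist f g (u n) z + c * inner ℝ (u n - u (n + 1)) (g z - g w)) :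
    bregmanDist f g z w ≤ 0 := by
  have hu₁ : Tendsto (fun n => u (n + 1)) atTop (𝓝 z) := hu.comp (tendsto_add_atTop_nat 1)
  have hbound : Tendsto (fun n => κ * bregmanDist f g (u n) z
      + c * inner ℝ (u n - u (n + 1)) (g z - g w) - inner ℝ (u (n + 1) - z) (g z - g w))
      atTop (𝓝 0) := by
    have hv : Tendsto (fun _ : ℕ => g z - g w) atTop (𝓝 (g z - g w)) := tendsto_const_nhds
    simpa using ((hd.const_mul κ).add (((hu.sub hu₁).inner hv).const_mul c)).sub
      ((hu₁.sub (tendsto_const_nhds (x := z))).inner hv)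
  refine ge_of_tendsto hbound (Eventually.of_forall fun n => ?_)
  have := bregmanDist_add_bregmanDist_add_inner (f := f) (g := g) (u (n + 1)) z w
  linarith [h n, hd₀ n]

lemma tendsto_bregmanDist_of_tendsto {α : Type*} {l : Filter α} {u : α → H} {z : H}
    (hf : ContinuousAt f z) (hu : Tendsto u l (𝓝 z)) :
    Tendsto (fun a => bregmanDist f g (u a) z) l (𝓝 0) := by
  have hcont : ContinuousAt (fun y => bregmanDist f g y z) z := by
    unfold bregmanDist
    fun_prop
  simpa [bregmanDist, Function.comp_def] using hcont.tendsto.comp hu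

lemma exists_pos_le_bregmanDist (hD : Convex ℝ D)
    (hnonneg : ∀ x ∈ interior D, ∀ y ∈ D, 0 ≤ bregmanDist f g y x) {z : H}
    (htc : IsTotallyConvexAt f g D z)
    (hz : z ∈ interior D) {ε : ℝ} (hε : 0 < ε) :
    ∃ c : ℝ, 0 < c ∧ ∀ w ∈ D, ε ≤ ‖w - z‖ → c ≤ bregmanDist f g w z := by
  obtain ⟨c, hc, hcle⟩ := htc (ε / 2) (half_pos hε)
  refine ⟨c, hc, fun w hw hwz => ?_⟩
  have hwz₀ : 0 < ‖w - z‖ := hε.trans_le hwz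
  -- `y ∈ [z, w]` with `‖y - z‖ = ε / 2`; as `r ≤ 1 / 2`, the inner-product term of the
  -- three-point identity for `w, y, z` is at least `D(y, z) + D(z, y) ≥ D(z, y)`
  set r := ε / (2 * ‖w - z‖) with hr_def
  have hr₀ : 0 < r := by positivity
  have hr : r ≤ 1 / 2 := by
    rw [div_le_iff₀ (by positivity)]
    linarith
  set y := z + r • (w - z)
  have hyD : y ∈ interior D := by
    have := hD.add_smul_sub_mem_interior hw hz (t := 1 - r) ⟨by linarith, by linarith⟩
    rwa [show w + (1 - r) • (z - w) = y by module] at this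
  have hyz : ‖y - z‖ = ε / 2 := by
    rw [add_sub_cancel_left, norm_smul, Real.norm_of_nonneg hr₀.le, hr_def]
    field_simp
  set a := inner ℝ (w - z) (g y - g z)
  have hwy : inner ℝ (w - y) (g y - g z) = (1 - r) * a := by
    rw [show w - y = (1 - r) • (w - z) by module, real_inner_smul_left]
  have hyz' : bregmanDist f g y z + bregmanDist f g z y = r * a := by
    rw [bregmanDist_add_bregmanDist_swap, add_sub_cancel_left, real_inner_smul_left]
  have h₁ := hnonneg y hyD w hw
  have h₂ := hnonneg z hz y (interior_subset hyD)
  have h₃ := hnonneg y hyD z (interior_subset hz)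
  have h₄ := hcle y (interior_subset hyD) hyz
  have ha : 0 ≤ a := nonneg_of_mul_nonneg_right (by linarith) hr₀
  rw [← bregmanDist_add_bregmanDist_add_inner w y z, hwy]
  nlinarith

lemma tendsto_of_tendsto_bregmanDist (hD : Convex ℝ D)
    (hnonneg : ∀ x ∈ interior D, ∀ y ∈ D, 0 ≤ bregmanDist f g y x) {z : H}
    (htc : IsTotallyConvexAt f g D z)
    (hz : z ∈ interior D) {α : Type*} {l : Filter α} {u : α → H} (hu : ∀ a, u a ∈ D)
    (hd : Tendsto (fun a => bregmanDist f g (u a) z) l (𝓝 0)) : Tendsto u l (𝓝 z) := by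
  rw [Metric.tendsto_nhds]
  intro ε hε
  obtain ⟨c, hc, hcle⟩ := exists_pos_le_bregmanDist hD hnonneg htc hz hε
  filter_upwards [hd.eventually (gt_mem_nhds hc)] with a ha
  rw [dist_eq_norm]
  by_contra! h
  linarith [hcle _ (hu a) h]

lemma eq_of_bregmanDist_nonpos {z : H}
    (htc : IsTotallyConvexAt f g D z)
    {y : H} (hy : y ∈ D) (h : bregmanDist f g z y ≤ 0) : y = z := by
  by_contra hne
  obtain ⟨c, hc, hcle⟩ := htc ‖y - z‖ (norm_pos_iff.mpr (sub_ne_zero.mpr hne))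
  linarith [hcle y hy rfl]

end Bregman

section HybridCyclic

variable {H : Type*} [NormedAddCommGroup H] [InnerProductSpace ℝ H]

/-- The generalized point-dependent `(K, λ)`-hybrid inequality of a `p`-cyclic map. -/
def IsHybridCyclic {p : ℕ} (f : H → ℝ) (g : H → H) (A : ZMod p → Set H) (T : H → H)
    (K : ZMod p → H → ℝ) (lam : H → ℝ) : Prop :=
  ∀ i, ∀ x ∈ A i, ∀ y ∈ A (i + 1),
    bregmanDist f g (T x) (T y) ≤ K i y * bregmanDist f g x y
      + lam y * inner ℝ (x - T x) (g y - g (T y))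

variable {f : H → ℝ} {g : H → H} {D : Set H} {p : ℕ} [NeZero p] {A : ZMod p → Set H}
  {T : H → H} {K : ZMod p → H → ℝ} {lam : H → ℝ} {z : H}

lemma IsHybridCyclic.apply_eq_self (hhyb : IsHybridCyclic f g A T K lam)
    (hT : ∀ i, Set.MapsTo T (A i) (A (i + 1))) (hAD : ∀ i, A i ⊆ D)
    (hnonneg : ∀ y ∈ D, 0 ≤ bregmanDist f g y z) (htc : IsTotallyConvexAt f g D z)
    (hz : ∀ i, z ∈ A i) (hf : ContinuousAt f z) {i₀ : ZMod p} {x₀ : H} (hx₀ : x₀ ∈ A i₀)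
    (hconv : Tendsto (fun n => T^[n] x₀) atTop (𝓝 z)) : T z = z := by
  obtain ⟨κ, hκ⟩ := (Set.finite_range fun j => K j z).bddAbove
  have horbit := iterate_mem_of_mapsTo_add_one hT hx₀
  refine eq_of_bregmanDist_nonpos htc (hAD _ (hT 0 (hz 0))) ?_
  refine bregmanDist_nonpos_of_tendsto (κ := κ) (c := lam z) hconv
    (tendsto_bregmanDist_of_tendsto hf hconv) (fun n => hnonneg _ (hAD _ (horbit _))) fun n => ?_
  have hstep := hhyb _ _ (horbit n) z (hz _)
  rw [← Function.iterate_succ_apply' T n x₀] at hstep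
  exact hstep.trans (by gcongr; exacts [hnonneg _ (hAD _ (horbit n)), hκ ⟨_, rfl⟩])

lemma IsHybridCyclic.tendsto_bregmanDist_iterate (hhyb : IsHybridCyclic f g A T K lam)
    (hT : ∀ i, Set.MapsTo T (A i) (A (i + 1))) (hAD : ∀ i, A i ⊆ D)
    (hnonneg : ∀ y ∈ D, 0 ≤ bregmanDist f g y z) (hKpos : ∀ i, ∀ y ∈ A (i + 1), 0 < K i y)
    (hKhat : ∀ i : ZMod p, ∀ y ∈ A (i + 1),
      (∏ m ∈ range p, K (i + (m : ZMod p)) (T^[m] y)) < 1)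
    (hz : ∀ i, z ∈ A i) (hTz : T z = z) {i : ZMod p} {x : H} (hx : x ∈ A i) :
    Tendsto (fun n => bregmanDist f g (T^[n] x) z) atTop (𝓝 0) := by
  have horbit := iterate_mem_of_mapsTo_add_one hT hx
  obtain ⟨j₀, hj₀⟩ := Finite.exists_max fun j : ZMod p => ∏ m ∈ range p, K (j + m) z
  have hκ : ∏ m ∈ range p, K (j₀ + m) z < 1 := by
    simpa only [Function.iterate_fixed hTz] using hKhat j₀ z (hz _)
  refine tendsto_zero_of_apply_succ_le_mul (k := fun n => K (i + n) z) (NeZero.pos p) hκ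
    (fun n => (hKpos _ z (hz _)).le) (fun n => hnonneg _ (hAD _ (horbit n))) (fun n => ?_)
    fun n => ?_
  · have hstep := hhyb _ _ (horbit n) z (hz _)
    rwa [hTz, sub_self, inner_zero_right, mul_zero, add_zero,
      ← Function.iterate_succ_apply' T n x] at hstep
  · simpa only [Nat.cast_add, add_assoc] using hj₀ (i + n)

end HybridCyclic

theorem hybrid_cyclic_unique_fixed_point_general
    {H : Type*} [NormedAddCommGroup H] [InnerProductSpace ℝ H] [CompleteSpace H]
    (D : Set H) (hD : Convex ℝ D)
    (f : H → ℝ) (g : H → H)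
    (hlsc : LowerSemicontinuous f)
    (hsc : StrictConvexOn ℝ D f)
    (hgat : ∀ x ∈ interior D, ∀ v : H,
      Tendsto (fun t : ℝ => (f (x + t • v) - f x) / t) (𝓝[≠] (0 : ℝ))
        (𝓝 (inner ℝ v (g x) : ℝ)))
    (Df : H → H → ℝ)
    (hDf : ∀ y x : H, Df y x = f y - f x - inner ℝ (y - x) (g x))
    -- total convexity: the modulus of total convexity is positive for `t > 0`
    (htc : ∀ x ∈ D, ∀ t : ℝ, 0 < t → ∃ c : ℝ, 0 < c ∧ ∀ y ∈ D, ‖y - x‖ = t → c ≤ Df x y)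
    (p : ℕ) (hp : 2 ≤ p)
    (A : ZMod p → Set H)
    (hAD : ∀ i, A i ⊆ interior D)
    (T : H → H)
    (hT : ∀ i, Set.MapsTo T (A i) (A (i + 1)))
    (K : ZMod p → H → ℝ) (lam : H → ℝ)
    (hKpos : ∀ i, ∀ y ∈ A (i + 1), 0 < K i y)
    (hhyb : ∀ i, ∀ x ∈ A i, ∀ y ∈ A (i + 1),
      Df (T x) (T y) ≤ K i y * Df x y
        + lam y * inner ℝ (x - T x) (g y - g (T y)))
    (hKhat : ∀ i : ZMod p, ∀ y ∈ A (i + 1),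
      (∏ m ∈ Finset.range p, K (i + (m : ZMod p)) (T^[m] y)) < 1)
    (x₀ : H) (hx₀ : x₀ ∈ ⋃ i, A i)
    (z : H) (hz : z ∈ ⋂ i, A i)
    (hconv : Tendsto (fun n => T^[n] x₀) atTop (𝓝 z)) :
    T z = z ∧ (∀ w ∈ ⋃ i, A i, T w = w → w = z) ∧
      ∀ x ∈ ⋃ i, A i, Tendsto (fun n => T^[n] x) atTop (𝓝 z) := by
  have : NeZero p := ⟨by omega⟩
  obtain rfl : Df = bregmanDist f g := funext fun y => funext (hDf y)
  have hnonneg : ∀ x ∈ interior D, ∀ y ∈ D, 0 ≤ bregmanDist f g y x := fun x hx y hy =>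
    bregmanDist_nonneg hsc.convexOn (interior_subset hx) hy
      ((hgat x hx (y - x)).mono_left (nhdsGT_le_nhdsNE 0))
  have hzA : ∀ i, z ∈ A i := Set.mem_iInter.mp hz
  have hzD : z ∈ interior D := hAD 0 (hzA 0)
  have htcz := htc z (interior_subset hzD)
  have hAD' : ∀ i, A i ⊆ D := fun i => (hAD i).trans interior_subset
  have hfz : ContinuousAt f z :=
    (hsc.convexOn.continuousOn_interior_of_lowerSemicontinuous hlsc).continuousAt
      (isOpen_interior.mem_nhds hzD)
  obtain ⟨i₀, hx₀i⟩ := Set.mem_iUnion.mp hx₀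
  have hTz : T z = z :=
    IsHybridCyclic.apply_eq_self hhyb hT hAD' (hnonneg z hzD) htcz hzA hfz hx₀i hconv
  have hlim : ∀ x ∈ ⋃ i, A i, Tendsto (fun n => T^[n] x) atTop (𝓝 z) := by
    intro x hx
    obtain ⟨i, hxi⟩ := Set.mem_iUnion.mp hx
    exact tendsto_of_tendsto_bregmanDist hD hnonneg htcz hzD
      (fun n => hAD' _ (iterate_mem_of_mapsTo_add_one hT hxi n))
      (IsHybridCyclic.tendsto_bregmanDist_iterate hhyb hT hAD' (hnonneg z hzD) hKpos hKhat hzA hTz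
        hxi)
  refine ⟨hTz, fun w hw hTw => ?_, hlim⟩
  exact tendsto_nhds_unique tendsto_const_nhds
    (by simpa only [Function.iterate_fixed hTw] using hlim w hw)

/-- Theorem 2.3: a generalized point-dependent `(K,λ)`-hybrid `p`-cyclic self-mapping relative to
the Bregman distance of a lower-semicontinuous, strictly and totally convex, Gâteaux
differentiable function, on intersecting nonempty bounded closed convex subsets, with
`K̂(y) < 1`, `λ` bounded and one norm-convergent orbit, has the limit `z` as its unique fixed
point and all orbits converge in norm to `z`. -/
theorem hybrid_cyclic_unique_fixed_point
    {H : Type*} [NormedAddCommGroup H] [InnerProductSpace ℝ H] [CompleteSpace H]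
    (D : Set H) (hD : Convex ℝ D) (hDint : (interior D).Nonempty)
    (f : H → ℝ) (g : H → H)
    (hlsc : LowerSemicontinuous f)
    (hsc : StrictConvexOn ℝ D f)
    (hgat : ∀ x ∈ interior D, ∀ v : H,
      Tendsto (fun t : ℝ => (f (x + t • v) - f x) / t) (𝓝[≠] (0 : ℝ))
        (𝓝 (inner ℝ v (g x) : ℝ)))
    (Df : H → H → ℝ)
    (hDf : ∀ y x : H, Df y x = f y - f x - inner ℝ (y - x) (g x))
    -- total convexity: the modulus of total convexity is positive for `t > 0`
    (htc : ∀ x ∈ D, ∀ t : ℝ, 0 < t → ∃ c : ℝ, 0 < c ∧ ∀ y ∈ D, ‖y - x‖ = t → c ≤ Df x y)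
    (p : ℕ) (hp : 2 ≤ p)
    (A : ZMod p → Set H)
    (hAne : ∀ i, (A i).Nonempty)
    (hAbd : ∀ i, Bornology.IsBounded (A i))
    (hAcl : ∀ i, IsClosed (A i))
    (hAcx : ∀ i, Convex ℝ (A i))
    (hAD : ∀ i, A i ⊆ interior D)
    (T : H → H)
    (hT : ∀ i, Set.MapsTo T (A i) (A (i + 1)))
    (K : ZMod p → H → ℝ) (lam : H → ℝ)
    (hKpos : ∀ i, ∀ y ∈ A (i + 1), 0 < K i y)
    (hKbdd : ∀ i, ∃ a : ℝ, ∀ y ∈ A (i + 1), K i y ≤ a)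
    (hlam : ∃ M : ℝ, ∀ y ∈ ⋃ i, A i, |lam y| ≤ M)
    (hhyb : ∀ i, ∀ x ∈ A i, ∀ y ∈ A (i + 1),
      Df (T x) (T y) ≤ K i y * Df x y
        + lam y * inner ℝ (x - T x) (g y - g (T y)))
    (hKhat : ∀ i : ZMod p, ∀ y ∈ A (i + 1),
      (∏ m ∈ Finset.range p, K (i + (m : ZMod p)) (T^[m] y)) < 1)
    (x₀ : H) (hx₀ : x₀ ∈ ⋃ i, A i)
    (z : H) (hz : z ∈ ⋂ i, A i)
    (hconv : Tendsto (fun n => T^[n] x₀) atTop (𝓝 z)) :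
    T z = z ∧ (∀ w ∈ ⋃ i, A i, T w = w → w = z) ∧
      ∀ x ∈ ⋃ i, A i, Tendsto (fun n => T^[n] x) atTop (𝓝 z) :=
  hybrid_cyclic_unique_fixed_point_general D hD f g hlsc hsc hgat Df hDf htc p hp A hAD T hT K lam
    hKpos hhyb hKhat x₀ hx₀ z hz hconv
end

section
/- Let H be a real Hilbert space, D ⊆ H a convex set with nonempty interior, and f : H → ℝ a lower-semicontinuous function that is strictly convex and totally convex on D and Gâteaux differentiable on the interior of D with Gâteaux gradient g. Let p ≥ 2, let A_1, …, A_p (indices modulo p) be nonempty, bounded, closed, convex subsets of the interior of D, and let T : ∪_i A_i → ∪_i A_i satisfy T(A_i) ⊆ A_{i+1}. Assume for every i the restricted composite map T^p : A_i → A_i satisfies D_f(T^p x, T^p y) ≤ K̂(y) D_f(x,y) + λ_i(y) ⟪x − T^p x, g y − g(T^p y)⟫ for all x, y ∈ A_i, where K̂(y) < 1 and λ_i is bounded, and that for every i there is x ∈ A_i with (T^{np} x) norm-convergent in A_i. Then for each i the map T^p : A_i → A_i has a unique fixed point z_i ∈ A_i, and these fixed points are cyclically permuted by T: z_{i+j}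 = T^j z_i for all i and all 1 ≤ j ≤ p (indices modulo p). -/
/-!
For each `i`, let `w` be the limit of the convergent orbit of `T^p` in `A i`. The hybrid
inequality at `y = w` together with lower semicontinuity of `f` forces `D_f(w, T^p w) ≤ 0`, and
total convexity turns this into `T^p w = w`. At any other fixed point `v` the inner-product term
vanishes, so `(1 - K̂) D_f(v, w) ≤ 0` and again `v = w`. Finally `T^j` commutes with `T^p` and
maps `A i` into `A (i + j)`, so `T^j z_i` is the fixed point `z_(i+j)`.
-/

open Topology Filter

theorem Set.mapsTo_iterate_of_mapsTo_add_one {α ι : Type*} [AddMonoidWithOne ι]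
    {A : ι → Set α} {T : α → α} (hT : ∀ i, Set.MapsTo T (A i) (A (i + 1))) (k : ℕ) (i : ι) :
    Set.MapsTo T^[k] (A i) (A (i + k)) := by
  induction k with
  | zero => simpa using Set.mapsTo_id (A i)
  | succ k ih =>
    rw [Function.iterate_succ', Nat.cast_succ, ← add_assoc]
    exact (hT _).comp ih

theorem eventually_lt_of_eventually_le_mul_add {a : ℕ → ℝ} {K c b : ℝ} (hK0 : 0 ≤ K)
    (hK1 : K < 1) (ha : ∀ᶠ n in atTop, a (n + 1) ≤ K * a n + (1 - K) * c) (hcb : c < b) :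
    ∀ᶠ n in atTop, a n < b := by
  obtain ⟨N, hN⟩ := eventually_atTop.1 ha
  have hgeom : ∀ k, a (k + N) - c ≤ K ^ k * (a N - c) := by
    intro k
    induction k with
    | zero => simp
    | succ k ih =>
      calc a (k + 1 + N) - c ≤ K * (a (k + N) - c) := by
            rw [add_right_comm]; linarith [hN (k + N) (Nat.le_add_left N k)]
        _ ≤ K * (K ^ k * (a N - c)) := mul_le_mul_of_nonneg_left ih hK0
        _ = K ^ (k + 1) * (a N - c) := by ring
  have hdecay : Tendsto (fun k => K ^ k * (a N - c)) atTop (𝓝 0) := by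
    simpa using (tendsto_pow_atTop_nhds_zero_of_lt_one hK0 hK1).mul_const (a N - c)
  rw [← map_add_atTop_eq_nat N, eventually_map]
  filter_upwards [hdecay.eventually (gt_mem_nhds (sub_pos.2 hcb))] with k hk
  linarith [hgeom k]

theorem one_sub_mul_le_of_le_mul_add {a r : ℕ → ℝ} {K R c : ℝ} (hK0 : 0 ≤ K) (hK1 : K < 1)
    (hrec : ∀ n, a (n + 1) ≤ K * a n + r n) (hr : Tendsto r atTop (𝓝 R))
    (hc : ∀ c' < c, ∀ᶠ n in atTop, c' < a n) : (1 - K) * c ≤ R := by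
  have hK : 0 < 1 - K := sub_pos.2 hK1
  by_contra! h
  obtain ⟨b, hRb, hbc⟩ := exists_between ((div_lt_iff₀' hK).2 h)
  obtain ⟨d, hRd, hdb⟩ := exists_between hRb
  have hbound : ∀ᶠ n in atTop, a (n + 1) ≤ K * a n + (1 - K) * d := by
    filter_upwards [hr.eventually (gt_mem_nhds ((div_lt_iff₀' hK).1 hRd))] with n hn
    linarith [hrec n]
  obtain ⟨n, hlt, hgt⟩ :=
    ((eventually_lt_of_eventually_le_mul_add hK0 hK1 hbound hdb).and (hc b hbc)).exists
  linarith

section Bregman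

variable {H : Type*} [NormedAddCommGroup H] {Df : H → H → ℝ} {D : Set H}

theorem eq_of_bregman_nonpos
    (htc : ∀ x ∈ D, ∀ t : ℝ, 0 < t → ∃ c : ℝ, 0 < c ∧ ∀ y ∈ D, ‖y - x‖ = t → c ≤ Df x y)
    {x y : H} (hx : x ∈ D) (hy : y ∈ D) (hxy : Df x y ≤ 0) : x = y := by
  by_contra hne
  obtain ⟨c, hc, hcle⟩ := htc x hx ‖y - x‖ (norm_pos_iff.2 (sub_ne_zero.2 (Ne.symm hne)))
  linarith [hcle y hy rfl]

variable [InnerProductSpace ℝ H] {f : H → ℝ} {g : H → H}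

/-- With `u n = S^[n] x₀`, the hybrid inequality at `(u n, w)` reads
`f (u (n+1)) ≤ K f (u n) + F (u n) (u (n+1))` with `F (u n) (u (n+1)) → F w w`; together with
`f w ≤ liminf f (u n)` this gives `(1 - K) f w ≤ F w w`, which is `D_f(w, S w) ≤ 0`. -/
theorem bregman_nonpos_of_tendsto_orbit
    (hDf : ∀ y x : H, Df y x = f y - f x - inner ℝ (y - x) (g x))
    {A : Set H} {S : H → H} (hS : Set.MapsTo S A A) {x₀ w : H} (hx₀ : x₀ ∈ A)
    (hlim : Tendsto (fun n => S^[n] x₀) atTop (𝓝 w)) (hf : LowerSemicontinuousAt f w)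
    {K lam : ℝ} (hK0 : 0 ≤ K) (hK1 : K < 1)
    (hhyb : ∀ x ∈ A, Df (S x) (S w) ≤ K * Df x w + lam * inner ℝ (x - S x) (g w - g (S w))) :
    Df w (S w) ≤ 0 := by
  set u : ℕ → H := fun n => S^[n] x₀
  let F : H → H → ℝ := fun y z => f (S w) + inner ℝ (z - S w) (g (S w))
    - K * (f w + inner ℝ (y - w) (g w)) + lam * inner ℝ (y - z) (g w - g (S w))
  have hrec : ∀ n, f (u (n + 1)) ≤ K * f (u n) + F (u n) (u (n + 1)) := by
    intro n
    have h := hhyb (u n) (hS.iterate n hx₀)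
    rw [hDf, hDf, ← Function.iterate_succ_apply' S n x₀] at h
    simp only [F]
    linarith
  have hFc : Continuous fun q : H × H => F q.1 q.2 := by
    simp only [F]
    fun_prop
  have hF : Tendsto (fun n => F (u n) (u (n + 1))) atTop (𝓝 (F w w)) :=
    ((hFc.tendsto (w, w)).comp (hlim.prodMk_nhds (hlim.comp (tendsto_add_atTop_nat 1))) :)
  have hlow : ∀ c < f w, ∀ᶠ n in atTop, c < f (u n) := fun c hc => hlim.eventually (hf c hc)
  have key := one_sub_mul_le_of_le_mul_add hK0 hK1 hrec hF hlow
  simp only [F, sub_self, inner_zero_left, mul_zero, add_zero] at key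
  rw [hDf]
  linarith

theorem eq_of_isFixedPt_of_hybrid
    (htc : ∀ x ∈ D, ∀ t : ℝ, 0 < t → ∃ c : ℝ, 0 < c ∧ ∀ y ∈ D, ‖y - x‖ = t → c ≤ Df x y)
    {S : H → H} {v w : H} (hv : v ∈ D) (hw : w ∈ D)
    (hSv : Function.IsFixedPt S v) (hSw : Function.IsFixedPt S w) {K lam : ℝ} (hK1 : K < 1)
    (hhyb : Df (S v) (S w) ≤ K * Df v w + lam * inner ℝ (v - S v) (g w - g (S w))) :
    v = w := by
  rw [hSv, hSw, sub_self, inner_zero_left, mul_zero, add_zero] at hhyb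
  exact eq_of_bregman_nonpos htc hv hw (by nlinarith)

theorem isFixedPt_and_unique_of_hybrid
    (hDf : ∀ y x : H, Df y x = f y - f x - inner ℝ (y - x) (g x))
    (htc : ∀ x ∈ D, ∀ t : ℝ, 0 < t → ∃ c : ℝ, 0 < c ∧ ∀ y ∈ D, ‖y - x‖ = t → c ≤ Df x y)
    (hf : LowerSemicontinuous f) {A : Set H} (hAD : A ⊆ D) {S : H → H} (hS : Set.MapsTo S A A)
    {K lam : H → ℝ} (hK0 : ∀ y ∈ A, 0 ≤ K y) (hK1 : ∀ y ∈ A, K y < 1)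
    (hhyb : ∀ x ∈ A, ∀ y ∈ A,
      Df (S x) (S y) ≤ K y * Df x y + lam y * inner ℝ (x - S x) (g y - g (S y)))
    {x₀ w : H} (hx₀ : x₀ ∈ A) (hw : w ∈ A) (hlim : Tendsto (fun n => S^[n] x₀) atTop (𝓝 w)) :
    Function.IsFixedPt S w ∧ ∀ v ∈ A, Function.IsFixedPt S v → v = w := by
  have hfix : Function.IsFixedPt S w :=
    (eq_of_bregman_nonpos htc (hAD hw) (hAD (hS hw)) (bregman_nonpos_of_tendsto_orbit hDf hS
      hx₀ hlim (hf w) (hK0 w hw) (hK1 w hw) fun x hx => hhyb x hx w hw)).symm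
  exact ⟨hfix, fun v hv hSv =>
    eq_of_isFixedPt_of_hybrid htc (hAD hv) (hAD hw) hSv hfix (hK1 w hw) (hhyb v hv w hw)⟩

end Bregman

theorem composite_fixed_points_cyclically_permuted_general
    {H : Type*} [NormedAddCommGroup H] [InnerProductSpace ℝ H]
    (D : Set H)
    (f : H → ℝ) (g : H → H)
    (hlsc : LowerSemicontinuous f)
    (Df : H → H → ℝ)
    (hDf : ∀ y x : H, Df y x = f y - f x - inner ℝ (y - x) (g x))
    -- total convexity: the modulus of total convexity is positive for `t > 0`
    (htc : ∀ x ∈ D, ∀ t : ℝ, 0 < t → ∃ c : ℝ, 0 < c ∧ ∀ y ∈ D, ‖y - x‖ = t → c ≤ Df x y)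
    (p : ℕ)
    (A : ZMod p → Set H)
    (hAD : ∀ i, A i ⊆ interior D)
    (T : H → H)
    (hT : ∀ i, Set.MapsTo T (A i) (A (i + 1)))
    (Khat : ZMod p → H → ℝ) (lam : ZMod p → H → ℝ)
    (hKpos : ∀ i, ∀ y ∈ A i, 0 < Khat i y)
    (hKlt : ∀ i, ∀ y ∈ A i, Khat i y < 1)
    (hhyb : ∀ i, ∀ x ∈ A i, ∀ y ∈ A i,
      Df (T^[p] x) (T^[p] y) ≤ Khat i y * Df x y
        + lam i y * inner ℝ (x - T^[p] x) (g y - g (T^[p] y)))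
    (hconv : ∀ i, ∃ x ∈ A i, ∃ w ∈ A i, Tendsto (fun n => T^[n * p] x) atTop (𝓝 w)) :
    ∃ z : ZMod p → H,
      (∀ i, z i ∈ A i ∧ T^[p] (z i) = z i ∧ ∀ w ∈ A i, T^[p] w = w → w = z i) ∧
      ∀ i : ZMod p, ∀ j : ℕ, 1 ≤ j → j ≤ p → z (i + (j : ZMod p)) = T^[j] (z i) := by
  have hmaps := Set.mapsTo_iterate_of_mapsTo_add_one hT
  have hself : ∀ i, Set.MapsTo T^[p] (A i) (A i) := fun i => by simpa using hmaps p i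
  have hfix : ∀ i, ∃ z ∈ A i,
      Function.IsFixedPt T^[p] z ∧ ∀ v ∈ A i, Function.IsFixedPt T^[p] v → v = z := by
    intro i
    obtain ⟨x, hx, w, hw, hlim⟩ := hconv i
    simp_rw [mul_comm _ p, Function.iterate_mul] at hlim
    exact ⟨w, hw, isFixedPt_and_unique_of_hybrid hDf htc hlsc ((hAD i).trans interior_subset)
      (hself i) (fun y hy => (hKpos i y hy).le) (hKlt i) (hhyb i) hx hw hlim⟩
  choose z hzA hzfix hzuniq using hfix
  refine ⟨z, fun i => ⟨hzA i, hzfix i, hzuniq i⟩, fun i j _ _ => ?_⟩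
  exact (hzuniq _ _ (hmaps j i (hzA i))
    ((hzfix i).map (Function.Commute.iterate_iterate_self T j p))).symm

/-- Corollary 2.4 (second part): if for every `i` the restricted composite map
`T^p : A_i → A_i` is a generalized point-dependent `(K̂_i, λ_i)`-hybrid contraction relative to
the Bregman distance (with `K̂_i < 1` and `λ_i` bounded) and some orbit `(T^{np} x)` with
`x ∈ A_i` converges in norm to a point of `A_i`, then each `T^p : A_i → A_i` has a unique fixed
point `z_i ∈ A_i`, and these fixed points are cyclically permuted: `z_{i+j} = T^j z_i`. -/
theorem composite_fixed_points_cyclically_permuted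
    {H : Type*} [NormedAddCommGroup H] [InnerProductSpace ℝ H] [CompleteSpace H]
    (D : Set H) (hD : Convex ℝ D) (hDint : (interior D).Nonempty)
    (f : H → ℝ) (g : H → H)
    (hlsc : LowerSemicontinuous f)
    (hsc : StrictConvexOn ℝ D f)
    (hgat : ∀ x ∈ interior D, ∀ v : H,
      Tendsto (fun t : ℝ => (f (x + t • v) - f x) / t) (𝓝[≠] (0 : ℝ))
        (𝓝 (inner ℝ v (g x) : ℝ)))
    (Df : H → H → ℝ)
    (hDf : ∀ y x : H, Df y x = f y - f x - inner ℝ (y - x) (g x))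
    -- total convexity: the modulus of total convexity is positive for `t > 0`
    (htc : ∀ x ∈ D, ∀ t : ℝ, 0 < t → ∃ c : ℝ, 0 < c ∧ ∀ y ∈ D, ‖y - x‖ = t → c ≤ Df x y)
    (p : ℕ) (hp : 2 ≤ p)
    (A : ZMod p → Set H)
    (hAne : ∀ i, (A i).Nonempty)
    (hAbd : ∀ i, Bornology.IsBounded (A i))
    (hAcl : ∀ i, IsClosed (A i))
    (hAcx : ∀ i, Convex ℝ (A i))
    (hAD : ∀ i, A i ⊆ interior D)
    (T : H → H)
    (hT : ∀ i, Set.MapsTo T (A i) (A (i + 1)))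
    (Khat : ZMod p → H → ℝ) (lam : ZMod p → H → ℝ)
    (hKpos : ∀ i, ∀ y ∈ A i, 0 < Khat i y)
    (hKlt : ∀ i, ∀ y ∈ A i, Khat i y < 1)
    (hlam : ∀ i, ∃ M : ℝ, ∀ y ∈ A i, |lam i y| ≤ M)
    (hhyb : ∀ i, ∀ x ∈ A i, ∀ y ∈ A i,
      Df (T^[p] x) (T^[p] y) ≤ Khat i y * Df x y
        + lam i y * inner ℝ (x - T^[p] x) (g y - g (T^[p] y)))
    (hconv : ∀ i, ∃ x ∈ A i, ∃ w ∈ A i, Tendsto (fun n => T^[n * p] x) atTop (𝓝 w)) :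
    ∃ z : ZMod p → H,
      (∀ i, z i ∈ A i ∧ T^[p] (z i) = z i ∧ ∀ w ∈ A i, T^[p] w = w → w = z i) ∧
      ∀ i : ZMod p, ∀ j : ℕ, 1 ≤ j → j ≤ p → z (i + (j : ZMod p)) = T^[j] (z i) :=
  composite_fixed_points_cyclically_permuted_general D f g hlsc Df hDf htc p A hAD T hT Khat lam
    hKpos hKlt hhyb hconv
end

section
/- Let H be a real Hilbert space, let p ≥ 2, let A_1, …, A_p (indices modulo p) be nonempty, bounded, closed, convex subsets of H, and let T : ∪_i A_i → ∪_i A_i satisfy T(A_i) ⊆ A_{i+1}. Assume T is a p-cyclic contraction: there is α ∈ (0,1) such that ‖Tx − Ty‖ ≤ α‖x − y‖ + (1 − α)·dist(A_i, A_{i+1}) for all x ∈ A_i, y ∈ A_{i+1} and all i, where dist(A_i, A_{i+1}) = inf{‖u − w‖ : u ∈ A_i, w ∈ A_{i+1}}. Then for each i the restricted composite map T^p : A_i → A_i has a unique fixed point v_i ∈ A_i, each v_i is a best proximity point of T, i.e., ‖v_i − T v_i‖ = dist(A_i, A_{i+1}), and these points are cyclically permuted by T: v_{i+j} = T^j v_i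 for all i and all 1 ≤ j ≤ p (indices modulo p). -/
open Topology Filter

/-!
Taking the infimum in the contraction inequality shows dist(A_{i+1}, A_{i+2}) ≤ dist(A_i, A_{i+1}),
so around the cycle all these distances equal one number d, and iterating the inequality gives
‖T^k x - T^k y‖ - d ≤ α^k (‖x - y‖ - d) for x ∈ A_i, y ∈ A_{i+1}.

The Hilbert space geometry enters through one estimate: if u, w lie in a convex set all of whose
points are at distance at least d from z, and both are within r of z, then the parallelogram law
applied to u - z, w - z and the midpoint gives ‖u - w‖ ≤ 2 √(r² - d²). With z_n = T^{pn+1} x₀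
and r = d + O(α^{pn}) this makes (T^{pn} x₀) Cauchy, and its limit v and T^p v are both within
r of z_{n+1}, hence equal. Two fixed points v, w of T^p in A_i are both at distance exactly d
from T w, so the same estimate with r = d gives uniqueness, and then T v_i = v_{i+1}.
-/

open Set Function

noncomputable def setDist {E : Type*} [SeminormedAddCommGroup E] (A B : Set E) : ℝ :=
  sInf {r : ℝ | ∃ u ∈ A, ∃ w ∈ B, r = ‖u - w‖}

section setDist

variable {E : Type*} [SeminormedAddCommGroup E] {A B : Set E}

theorem setDist_nonneg : 0 ≤ setDist A B :=
  Real.sInf_nonneg <| by rintro r ⟨u, -, w, -, rfl⟩; positivity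

theorem setDist_le_norm_sub {u w : E} (hu : u ∈ A) (hw : w ∈ B) : setDist A B ≤ ‖u - w‖ :=
  csInf_le ⟨0, by rintro r ⟨u, -, w, -, rfl⟩; positivity⟩ ⟨u, hu, w, hw, rfl⟩

theorem le_setDist (hA : A.Nonempty) (hB : B.Nonempty) {c : ℝ}
    (h : ∀ u ∈ A, ∀ w ∈ B, c ≤ ‖u - w‖) : c ≤ setDist A B := by
  obtain ⟨u, hu⟩ := hA
  obtain ⟨w, hw⟩ := hB
  exact le_csInf ⟨_, u, hu, w, hw, rfl⟩ <| by rintro r ⟨u, hu, w, hw, rfl⟩; exact h u hu w hw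

theorem setDist_le_of_mapsTo {C D : Set E} {T : E → E} {α : ℝ} (hA : A.Nonempty)
    (hB : B.Nonempty) (hAC : MapsTo T A C) (hBD : MapsTo T B D) (hα : 0 < α)
    (hT : ∀ x ∈ A, ∀ y ∈ B, ‖T x - T y‖ ≤ α * ‖x - y‖ + (1 - α) * setDist A B) :
    setDist C D ≤ setDist A B := by
  have key : (setDist C D - (1 - α) * setDist A B) / α ≤ setDist A B := by
    refine le_setDist hA hB fun x hx y hy => (div_le_iff₀ hα).2 ?_
    linarith [setDist_le_norm_sub (hAC hx) (hBD hy), hT x hx y hy]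
  rw [div_le_iff₀ hα] at key
  linarith

end setDist

theorem ZMod.eq_of_forall_add_one_le {p : ℕ} [NeZero p] {β : Type*} [PartialOrder β]
    {f : ZMod p → β} (hf : ∀ i, f (i + 1) ≤ f i) (i j : ZMod p) : f i = f j := by
  have add_le : ∀ (i : ZMod p) (n : ℕ), f (i + n) ≤ f i := by
    intro i n
    induction n with
    | zero => simp
    | succ n ih =>
      have h : f (i + (n + 1 : ℕ)) ≤ f (i + n) := by simpa [add_assoc] using hf (i + n)
      exact h.trans ih
  have le_of (i j : ZMod p) : f j ≤ f i := by
    simpa using add_le i (j - i).val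
  exact le_antisymm (le_of j i) (le_of i j)

theorem tendsto_two_mul_sqrt_sq_sub_sq {ι : Type*} {l : Filter ι} {ε : ι → ℝ} (d : ℝ)
    (hε : Tendsto ε l (𝓝 0)) : Tendsto (fun n => 2 * √((d + ε n) ^ 2 - d ^ 2)) l (𝓝 0) := by
  convert (((hε.const_add d).pow 2).sub_const (d ^ 2)).sqrt.const_mul 2 using 2
  simp

section Hilbert

variable {H : Type*} [NormedAddCommGroup H] [InnerProductSpace ℝ H]

theorem Convex.norm_sub_le_two_mul_sqrt {A : Set H} (hA : Convex ℝ A) {z : H} {d r : ℝ}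
    (hd : 0 ≤ d) (hdA : ∀ m ∈ A, d ≤ ‖m - z‖) {u w : H} (hu : u ∈ A) (hw : w ∈ A)
    (hur : ‖u - z‖ ≤ r) (hwr : ‖w - z‖ ≤ r) : ‖u - w‖ ≤ 2 * √(r ^ 2 - d ^ 2) := by
  have hmid : d ≤ ‖(1 / 2 : ℝ) • (u + w) - z‖ := hdA _ <| by
    simpa [smul_add] using hA hu hw (by norm_num : (0 : ℝ) ≤ 1 / 2) (by norm_num) (by norm_num)
  have hpar := parallelogram_law_with_norm ℝ (u - z) (w - z)
  rw [show u - z + (w - z) = (2 : ℝ) • ((1 / 2 : ℝ) • (u + w) - z) by module,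
    show u - z - (w - z) = u - w by abel, norm_smul, Real.norm_two] at hpar
  have hsq : ‖u - w‖ ^ 2 ≤ 4 * (r ^ 2 - d ^ 2) := by
    nlinarith [norm_nonneg (u - z), norm_nonneg (w - z)]
  calc ‖u - w‖ ≤ √(4 * (r ^ 2 - d ^ 2)) := by simpa using Real.abs_le_sqrt hsq
    _ = 2 * √(r ^ 2 - d ^ 2) := by
      rw [Real.sqrt_mul (by norm_num), show (4 : ℝ) = 2 ^ 2 by norm_num, Real.sqrt_sq two_pos.le]

theorem Convex.cauchySeq_of_norm_sub_le {A : Set H} (hA : Convex ℝ A) {d : ℝ} (hd : 0 ≤ d)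
    {x z : ℕ → H} {ε : ℕ → ℝ} (hε : Tendsto ε atTop (𝓝 0)) (hx : ∀ n, x n ∈ A)
    (hdA : ∀ n, ∀ m ∈ A, d ≤ ‖m - z n‖) (hxz : ∀ n m, n ≤ m → ‖x m - z n‖ ≤ d + ε n) :
    CauchySeq x :=
  cauchySeq_of_le_tendsto_0' _ (fun n m hnm => by
    simpa [dist_eq_norm] using hA.norm_sub_le_two_mul_sqrt hd (hdA n) (hx n) (hx m)
      (hxz n n le_rfl) (hxz n m hnm)) (tendsto_two_mul_sqrt_sq_sub_sq d hε)

end Hilbert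

/-- The contraction condition once all gaps `dist(A i, A (i + 1))` are known to equal `d`; of that
equality only the lower bound `d ≤ ‖u - w‖` is recorded. -/
structure IsCyclicContraction {E : Type*} [SeminormedAddCommGroup E] {p : ℕ}
    (A : ZMod p → Set E) (T : E → E) (α d : ℝ) : Prop where
  mapsTo : ∀ i, MapsTo T (A i) (A (i + 1))
  le_norm_sub : ∀ i, ∀ u ∈ A i, ∀ w ∈ A (i + 1), d ≤ ‖u - w‖
  norm_sub_le : ∀ i, ∀ x ∈ A i, ∀ y ∈ A (i + 1), ‖T x - T y‖ ≤ α * ‖x - y‖ + (1 - α) * d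

namespace IsCyclicContraction

section Normed

variable {E : Type*} [SeminormedAddCommGroup E] {p : ℕ} {A : ZMod p → Set E} {T : E → E}
  {α d : ℝ}

theorem iterate_mapsTo (hT : IsCyclicContraction A T α d) (i : ZMod p) (k : ℕ) :
    MapsTo T^[k] (A i) (A (i + k)) := by
  induction k with
  | zero => simpa using mapsTo_id (A i)
  | succ k ih =>
    rw [iterate_succ']
    simpa [add_assoc] using (hT.mapsTo _).comp ih

theorem iterate_mul_mapsTo (hT : IsCyclicContraction A T α d) (i : ZMod p) (n : ℕ) :
    MapsTo T^[p * n] (A i) (A i) := by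
  simpa using hT.iterate_mapsTo i (p * n)

theorem norm_iterate_sub_le (hT : IsCyclicContraction A T α d) (hα : 0 ≤ α) {i : ZMod p}
    {x y : E} (hx : x ∈ A i) (hy : y ∈ A (i + 1)) (k : ℕ) :
    ‖T^[k] x - T^[k] y‖ ≤ d + α ^ k * (‖x - y‖ - d) := by
  induction k generalizing i x y with
  | zero => simp
  | succ k ih =>
    have hstep := hT.norm_sub_le i x hx y hy
    calc ‖T^[k + 1] x - T^[k + 1] y‖ ≤ d + α ^ k * (‖T x - T y‖ - d) :=
          ih (hT.mapsTo i hx) (hT.mapsTo (i + 1) hy)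
      _ ≤ d + α ^ (k + 1) * (‖x - y‖ - d) := by
          rw [pow_succ]; nlinarith [pow_nonneg hα k]

theorem norm_sub_eq_of_isFixedPt (hT : IsCyclicContraction A T α d) (hα0 : 0 ≤ α) (hα1 : α < 1)
    (hp : p ≠ 0) {i : ZMod p} {x y : E} (hx : x ∈ A i) (hy : y ∈ A (i + 1))
    (hfx : IsFixedPt T^[p] x) (hfy : IsFixedPt T^[p] y) : ‖x - y‖ = d := by
  have h := hT.norm_iterate_sub_le hα0 hx hy p
  rw [hfx, hfy] at h
  nlinarith [pow_lt_one₀ hα0 hα1 hp, hT.le_norm_sub i x hx y hy]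

end Normed

section Hilbert

variable {H : Type*} [NormedAddCommGroup H] [InnerProductSpace ℝ H] {p : ℕ}
  {A : ZMod p → Set H} {T : H → H} {α d : ℝ}

theorem eq_of_isFixedPt (hT : IsCyclicContraction A T α d) (hα0 : 0 ≤ α) (hα1 : α < 1)
    (hp : p ≠ 0) (hd : 0 ≤ d) {i : ZMod p} (hA : Convex ℝ (A i)) {v w : H} (hv : v ∈ A i)
    (hw : w ∈ A i) (hfv : IsFixedPt T^[p] v) (hfw : IsFixedPt T^[p] w) : v = w := by
  have hTw : IsFixedPt T^[p] (T w) := hfw.map (Commute.iterate_self T p).symm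
  have hdist {u} (hu : u ∈ A i) (hfu : IsFixedPt T^[p] u) : ‖u - T w‖ = d :=
    hT.norm_sub_eq_of_isFixedPt hα0 hα1 hp hu (hT.mapsTo i hw) hfu hTw
  have h := hA.norm_sub_le_two_mul_sqrt hd (hT.le_norm_sub i · · _ (hT.mapsTo i hw)) hv hw
    (hdist hv hfv).le (hdist hw hfw).le
  simpa [sub_eq_zero] using h

theorem exists_isFixedPt [CompleteSpace H] (hT : IsCyclicContraction A T α d) (hα0 : 0 ≤ α)
    (hα1 : α < 1) (hp : p ≠ 0) (hd : 0 ≤ d) {i : ZMod p} (hne : (A i).Nonempty)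
    (hbdd : Bornology.IsBounded (A i)) (hcl : IsClosed (A i)) (hcx : Convex ℝ (A i)) :
    ∃ v ∈ A i, IsFixedPt T^[p] v := by
  obtain ⟨x₀, hx₀⟩ := hne
  obtain ⟨R, hR⟩ := hbdd.subset_closedBall (T x₀)
  have hx₁ : T x₀ ∈ A (i + 1) := hT.mapsTo i hx₀
  set ε : ℕ → ℝ := fun n => α ^ (p * n) * R
  have hε : Tendsto ε atTop (𝓝 0) := by
    simpa [ε, pow_mul] using
      (tendsto_pow_atTop_nhds_zero_of_lt_one (pow_nonneg hα0 p) (pow_lt_one₀ hα0 hα1 hp)).mul_const R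
  set z : ℕ → H := fun n => T^[p * n] (T x₀)
  have hz n : z n ∈ A (i + 1) := hT.iterate_mul_mapsTo (i + 1) n hx₁
  have hdz n : ∀ m ∈ A i, d ≤ ‖m - z n‖ := fun m hm => hT.le_norm_sub i m hm (z n) (hz n)
  have hxz n m (hnm : n ≤ m) : ‖T^[p * m] x₀ - z n‖ ≤ d + ε n := by
    obtain ⟨k, rfl⟩ := Nat.exists_eq_add_of_le hnm
    have hk := hT.iterate_mul_mapsTo i k hx₀
    have hRk : ‖T^[p * k] x₀ - T x₀‖ ≤ R := by simpa [dist_eq_norm] using hR hk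
    rw [mul_add, iterate_add_apply]
    nlinarith [hT.norm_iterate_sub_le hα0 hk hx₁ (p * n), pow_nonneg hα0 (p * n)]
  obtain ⟨v, hv⟩ := cauchySeq_tendsto_of_complete <| hcx.cauchySeq_of_norm_sub_le hd hε
    (fun n => hT.iterate_mul_mapsTo i n hx₀) hdz hxz
  have hvA : v ∈ A i :=
    hcl.mem_of_tendsto hv (Eventually.of_forall fun n => hT.iterate_mul_mapsTo i n hx₀)
  have hTpv : T^[p] v ∈ A i := by simpa using hT.iterate_mul_mapsTo i 1 hvA
  have hvz n : ‖v - z n‖ ≤ d + ε n :=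
    le_of_tendsto (hv.sub_const (z n)).norm (eventually_atTop.2 ⟨n, hxz n⟩)
  have hTvz n : ‖T^[p] v - z (n + 1)‖ ≤ d + ε (n + 1) := by
    have h := hT.norm_iterate_sub_le hα0 hvA (hz n) p
    rw [← iterate_add_apply, add_comm p, ← mul_add_one] at h
    have hε_succ : ε (n + 1) = α ^ p * ε n := by simp only [ε]; ring
    nlinarith [hvz n, pow_nonneg hα0 p]
  have hbound n : ‖T^[p] v - v‖ ≤ 2 * √((d + ε (n + 1)) ^ 2 - d ^ 2) :=
    hcx.norm_sub_le_two_mul_sqrt hd (hdz (n + 1)) hTpv hvA (hTvz n) (hvz (n + 1))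
  refine ⟨v, hvA, sub_eq_zero.1 (norm_le_zero_iff.1 ?_)⟩
  exact ge_of_tendsto (tendsto_two_mul_sqrt_sq_sub_sq d (hε.comp (tendsto_add_atTop_nat 1)))
    (Eventually.of_forall hbound)

end Hilbert

end IsCyclicContraction

/-- Theorem 3.3 (i): a `p`-cyclic contraction `T` on nonempty bounded closed convex subsets of
a Hilbert space has, for each `i`, a unique fixed point `v_i` of the restricted composite map
`T^p : A_i → A_i`; each `v_i` is a best proximity point, `‖v_i − T v_i‖ = dist(A_i, A_{i+1})`,
and the points are cyclically permuted: `v_{i+j} = T^j v_i`. -/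
theorem cyclic_contraction_best_proximity_points
    {H : Type*} [NormedAddCommGroup H] [InnerProductSpace ℝ H] [CompleteSpace H]
    (p : ℕ) (hp : 2 ≤ p)
    (A : ZMod p → Set H)
    (hAne : ∀ i, (A i).Nonempty)
    (hAbd : ∀ i, Bornology.IsBounded (A i))
    (hAcl : ∀ i, IsClosed (A i))
    (hAcx : ∀ i, Convex ℝ (A i))
    (T : H → H)
    (hT : ∀ i, Set.MapsTo T (A i) (A (i + 1)))
    (dd : ZMod p → ℝ)
    (hdd : ∀ i, dd i = sInf {r : ℝ | ∃ u ∈ A i, ∃ w ∈ A (i + 1), r = ‖u - w‖})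
    (α : ℝ) (hα0 : 0 < α) (hα1 : α < 1)
    (hcontr : ∀ i : ZMod p, ∀ x ∈ A i, ∀ y ∈ A (i + 1),
      ‖T x - T y‖ ≤ α * ‖x - y‖ + (1 - α) * dd i) :
    ∃ v : ZMod p → H, ∀ i : ZMod p,
      v i ∈ A i ∧ T^[p] (v i) = v i ∧ (∀ w ∈ A i, T^[p] w = w → w = v i) ∧
      ‖v i - T (v i)‖ = dd i ∧
      ∀ j : ℕ, 1 ≤ j → j ≤ p → v (i + (j : ZMod p)) = T^[j] (v i) := by
  have hp0 : p ≠ 0 := by omega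
  have : NeZero p := ⟨hp0⟩
  have hdist i : dd i = setDist (A i) (A (i + 1)) := hdd i
  have hd i : dd i = dd 0 := ZMod.eq_of_forall_add_one_le (fun i => by
    simpa only [hdist] using setDist_le_of_mapsTo (hAne i) (hAne (i + 1)) (hT i) (hT (i + 1)) hα0
      (by simpa only [hdist] using hcontr i)) i 0
  have hC : IsCyclicContraction A T α (dd 0) :=
    { mapsTo := hT
      le_norm_sub := fun i u hu w hw => hd i ▸ hdist i ▸ setDist_le_norm_sub hu hw
      norm_sub_le := fun i => hd i ▸ hcontr i }
  have hd0 : 0 ≤ dd 0 := hdist 0 ▸ setDist_nonneg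
  choose v hvA hvfix using fun i =>
    hC.exists_isFixedPt hα0.le hα1 hp0 hd0 (hAne i) (hAbd i) (hAcl i) (hAcx i)
  have huniq i {w} (hw : w ∈ A i) (hfw : IsFixedPt T^[p] w) : w = v i :=
    hC.eq_of_isFixedPt hα0.le hα1 hp0 hd0 (hAcx i) hw (hvA i) hfw (hvfix i)
  have hTv i : IsFixedPt T^[p] (T (v i)) := (hvfix i).map (Commute.iterate_self T p).symm
  have hsemiconj : Semiconj v (· + 1) T := fun i => (huniq (i + 1) (hT i (hvA i)) (hTv i)).symm
  refine ⟨v, fun i => ⟨hvA i, hvfix i, fun w hw hfw => huniq i hw hfw, ?_, fun j _ _ => ?_⟩⟩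
  · rw [hd i]
    exact hC.norm_sub_eq_of_isFixedPt hα0.le hα1 hp0 (hvA i) (hT i (hvA i)) (hvfix i) (hTv i)
  · simpa using hsemiconj.iterate_right j i
end

section
/- Let H be a real Hilbert space, let p ≥ 2, let A_1, …, A_p (indices modulo p) be nonempty, bounded, closed, convex subsets of H with nonempty intersection ∩_i A_i ≠ ∅, and let T : ∪_i A_i → ∪_i A_i satisfy T(A_i) ⊆ A_{i+1}. Assume T is a p-cyclic contraction: there is α ∈ (0,1) such that ‖Tx − Ty‖ ≤ α‖x − y‖ + (1 − α)·dist(A_i, A_{i+1}) for all x ∈ A_i, y ∈ A_{i+1} and all i. Then T has a unique fixed point v, this v lies in ∩_i A_i, and v is also the unique fixed point of the restricted composite map T^p : A_i → A_i for every i. -/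
/-!
A common point of the sets makes every gap `dist(A i, A (i + 1))` vanish, so the cyclic
contraction condition becomes an honest `α`-contraction between consecutive sets. Since `T` maps
`⋂ i, A i` into itself, Banach's theorem on this closed set gives a fixed point `v`. As `v` lies
in every `A i`, each point `x` of `⋃ i, A i` satisfies `dist (T x) v ≤ α * dist x v`, so every
iterate `T^[k]` with `k ≠ 0` pulls all points of the union strictly towards `v`; hence `v` is the
only fixed point of `T` and of `T^[p]` there.
-/

open Set

theorem sInf_norm_sub_eq_zero_of_inter_nonempty {E : Type*} [SeminormedAddCommGroup E]
    {B C : Set E} (h : (B ∩ C).Nonempty) :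
    sInf {r : ℝ | ∃ u ∈ B, ∃ w ∈ C, r = ‖u - w‖} = 0 := by
  obtain ⟨z, hzB, hzC⟩ := h
  have hzero : (0 : ℝ) ∈ {r : ℝ | ∃ u ∈ B, ∃ w ∈ C, r = ‖u - w‖} := ⟨z, hzB, z, hzC, by simp⟩
  have hnonneg : ∀ r ∈ {r : ℝ | ∃ u ∈ B, ∃ w ∈ C, r = ‖u - w‖}, 0 ≤ r := by
    rintro r ⟨u, -, w, -, rfl⟩
    exact norm_nonneg _
  exact le_antisymm (csInf_le ⟨0, hnonneg⟩ hzero) (le_csInf ⟨0, hzero⟩ hnonneg)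

section Shift

variable {ι X : Type*} {A : ι → Set X} {T : X → X}

theorem mapsTo_iInter_of_mapsTo_add [AddGroup ι] {a : ι}
    (hT : ∀ i, MapsTo T (A i) (A (i + a))) : MapsTo T (⋂ i, A i) (⋂ i, A i) := by
  intro x hx
  refine mem_iInter.mpr fun j => ?_
  simpa using hT (j - a) (mem_iInter.mp hx (j - a))

theorem mapsTo_iUnion_of_mapsTo_add [Add ι] {a : ι}
    (hT : ∀ i, MapsTo T (A i) (A (i + a))) : MapsTo T (⋃ i, A i) (⋃ i, A i) :=
  mapsTo_iUnion.mpr fun i => (hT i).mono_right (subset_iUnion A (i + a))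

end Shift

section Contraction

variable {X : Type*} [MetricSpace X] {T : X → X} {α : ℝ}

theorem eq_of_dist_le_mul_dist {x y : X} (hα : α < 1) (h : dist x y ≤ α * dist x y) : x = y := by
  have hnonneg := dist_nonneg (x := x) (y := y)
  exact dist_le_zero.mp (by nlinarith)

theorem exists_fixedPoint_of_dist_le_mul_dist_on {S : Set X} (hS : IsComplete S)
    (hne : S.Nonempty) (hTS : MapsTo T S S) (hα0 : 0 ≤ α) (hα1 : α < 1)
    (hcontr : ∀ x ∈ S, ∀ y ∈ S, dist (T x) (T y) ≤ α * dist x y) : ∃ v ∈ S, T v = v := by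
  have hLip : LipschitzOnWith ⟨α, hα0⟩ T S := LipschitzOnWith.of_dist_le_mul hcontr
  have hCW : ContractingWith ⟨α, hα0⟩ (hTS.restrict T S S) :=
    ⟨NNReal.coe_lt_coe.mp hα1, hLip.mapsToRestrict hTS⟩
  obtain ⟨z, hz⟩ := hne
  obtain ⟨v, hvS, hv, -⟩ := hCW.exists_fixedPoint' hS hTS hz (edist_ne_top _ _)
  exact ⟨v, hvS, hv⟩

variable {U : Set X} {v : X}

theorem dist_iterate_le_pow_mul_dist (hU : MapsTo T U U) (hα0 : 0 ≤ α)
    (hv : ∀ x ∈ U, dist (T x) v ≤ α * dist x v) (k : ℕ) {x : X} (hx : x ∈ U) :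
    dist (T^[k] x) v ≤ α ^ k * dist x v := by
  induction k with
  | zero => simp
  | succ k ih =>
    calc dist (T^[k + 1] x) v = dist (T (T^[k] x)) v := by rw [Function.iterate_succ_apply']
      _ ≤ α * dist (T^[k] x) v := hv _ (hU.iterate k hx)
      _ ≤ α * (α ^ k * dist x v) := mul_le_mul_of_nonneg_left ih hα0
      _ = α ^ (k + 1) * dist x v := by ring

theorem eq_of_iterate_eq_self (hU : MapsTo T U U) (hα0 : 0 ≤ α) (hα1 : α < 1)
    (hv : ∀ x ∈ U, dist (T x) v ≤ α * dist x v) {k : ℕ} (hk : k ≠ 0) {x : X} (hx : x ∈ U)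
    (hfix : T^[k] x = x) : x = v := by
  have h := dist_iterate_le_pow_mul_dist hU hα0 hv k hx
  rw [hfix] at h
  exact eq_of_dist_le_mul_dist (pow_lt_one₀ hα0 hα1 hk) h

end Contraction

theorem cyclic_contraction_unique_fixed_point_of_intersecting_general
    {H : Type*} [NormedAddCommGroup H] [CompleteSpace H]
    (p : ℕ) (hp : 2 ≤ p)
    (A : ZMod p → Set H)
    (hAcl : ∀ i, IsClosed (A i))
    (hAint : (⋂ i, A i).Nonempty)
    (T : H → H)
    (hT : ∀ i, Set.MapsTo T (A i) (A (i + 1)))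
    (dd : ZMod p → ℝ)
    (hdd : ∀ i, dd i = sInf {r : ℝ | ∃ u ∈ A i, ∃ w ∈ A (i + 1), r = ‖u - w‖})
    (α : ℝ) (hα0 : 0 < α) (hα1 : α < 1)
    (hcontr : ∀ i : ZMod p, ∀ x ∈ A i, ∀ y ∈ A (i + 1),
      ‖T x - T y‖ ≤ α * ‖x - y‖ + (1 - α) * dd i) :
    ∃ v : H, v ∈ ⋂ i, A i ∧ T v = v ∧ (∀ w ∈ ⋃ i, A i, T w = w → w = v) ∧
      ∀ i : ZMod p, T^[p] v = v ∧ ∀ w ∈ A i, T^[p] w = w → w = v := by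
  have hgap : ∀ i, dd i = 0 := fun i => by
    obtain ⟨z, hz⟩ := hAint
    exact (hdd i).trans <| sInf_norm_sub_eq_zero_of_inter_nonempty
      ⟨z, mem_iInter.mp hz i, mem_iInter.mp hz (i + 1)⟩
  have hc : ∀ i, ∀ x ∈ A i, ∀ y ∈ A (i + 1), dist (T x) (T y) ≤ α * dist x y := by
    intro i x hx y hy
    simpa [dist_eq_norm, hgap i] using hcontr i x hx y hy
  obtain ⟨v, hvS, hTv⟩ := exists_fixedPoint_of_dist_le_mul_dist_on
    (isClosed_iInter hAcl).isComplete hAint (mapsTo_iInter_of_mapsTo_add hT) hα0.le hα1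
    fun x hx y hy => hc 0 x (mem_iInter.mp hx 0) y (mem_iInter.mp hy (0 + 1))
  have hUnion := mapsTo_iUnion_of_mapsTo_add hT
  have htoward : ∀ x ∈ ⋃ i, A i, dist (T x) v ≤ α * dist x v := by
    rintro x ⟨_, ⟨i, rfl⟩, hx⟩
    simpa [hTv] using hc i x hx v (mem_iInter.mp hvS (i + 1))
  refine ⟨v, hvS, hTv, fun w hw hTw => ?_, fun i => ⟨Function.iterate_fixed hTv p, ?_⟩⟩
  · exact eq_of_iterate_eq_self hUnion hα0.le hα1 htoward one_ne_zero hw hTw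
  · exact fun w hw => eq_of_iterate_eq_self hUnion hα0.le hα1 htoward (by omega)
      (mem_iUnion_of_mem i hw)

/-- Theorem 3.3 (ii): a `p`-cyclic contraction `T` on nonempty bounded closed convex subsets
with nonempty intersection has a unique fixed point `v ∈ ∩_i A_i`, which is also the unique
fixed point of the restricted composite map `T^p : A_i → A_i` for every `i`. -/
theorem cyclic_contraction_unique_fixed_point_of_intersecting
    {H : Type*} [NormedAddCommGroup H] [InnerProductSpace ℝ H] [CompleteSpace H]
    (p : ℕ) (hp : 2 ≤ p)
    (A : ZMod p → Set H)
    (hAne : ∀ i, (A i).Nonempty)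
    (hAbd : ∀ i, Bornology.IsBounded (A i))
    (hAcl : ∀ i, IsClosed (A i))
    (hAcx : ∀ i, Convex ℝ (A i))
    (hAint : (⋂ i, A i).Nonempty)
    (T : H → H)
    (hT : ∀ i, Set.MapsTo T (A i) (A (i + 1)))
    (dd : ZMod p → ℝ)
    (hdd : ∀ i, dd i = sInf {r : ℝ | ∃ u ∈ A i, ∃ w ∈ A (i + 1), r = ‖u - w‖})
    (α : ℝ) (hα0 : 0 < α) (hα1 : α < 1)
    (hcontr : ∀ i : ZMod p, ∀ x ∈ A i, ∀ y ∈ A (i + 1),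
      ‖T x - T y‖ ≤ α * ‖x - y‖ + (1 - α) * dd i) :
    ∃ v : H, v ∈ ⋂ i, A i ∧ T v = v ∧ (∀ w ∈ ⋃ i, A i, T w = w → w = v) ∧
      ∀ i : ZMod p, T^[p] v = v ∧ ∀ w ∈ A i, T^[p] w = w → w = v :=
  cyclic_contraction_unique_fixed_point_of_intersecting_general p hp A hAcl hAint T hT dd hdd α hα0
    hα1 hcontr
end

section
/- Let H be a real Hilbert space, D ⊆ H a convex set with nonempty interior, and f : H → ℝ strictly convex on D and Gâteaux differentiable on the interior of D with Gâteaux gradient g. Let A ⊆ interior of D be a nonempty, closed, convex set and let S : A → A be quasi-nonexpansive relative to the Bregman distance D_f, meaning that the fixed point set F(S) = {v ∈ A : Sv = v} is nonempty and D_f(v, Sx) ≤ D_f(v, x) for every v ∈ F(S) and every x ∈ A. Then F(S) is a closed and convex subset of A. -/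
/-!
Strict convexity of `f` makes the Bregman distance `D_f(y, x)` positive for `y ≠ x`, the Gâteaux
derivative being strictly below the secant slope. For fixed `v`, the inequality
`D_f(u, S v) ≤ D_f(u, v)` is affine in `u`, so it cuts out a closed half-space, which contains
`F(S)`. If `v ∈ A` lies in the closed convex hull of `F(S)`, it lies in that half-space, i.e.
`D_f(v, S v) ≤ 0`, hence `S v = v`. Thus `F(S) = A ∩ closedConvexHull F(S)`.
-/

open Topology Filter

theorem StrictConvexOn.comp_add_smul_sub {E : Type*} [AddCommGroup E] [Module ℝ E]
    {s : Set E} {f : E → ℝ} (hf : StrictConvexOn ℝ s f) {x y : E} (hx : x ∈ s) (hy : y ∈ s)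
    (hxy : x ≠ y) : StrictConvexOn ℝ (Set.Icc 0 1) (fun t : ℝ => f (x + t • (y - x))) := by
  have hmem : ∀ t ∈ Set.Icc (0 : ℝ) 1, x + t • (y - x) ∈ s := fun t ht => by
    simpa [AffineMap.lineMap_apply_module', add_comm] using hf.1.lineMap_mem hx hy ht
  refine ⟨convex_Icc 0 1, fun a ha b hb hab α β hα hβ hαβ => ?_⟩
  have hne : x + a • (y - x) ≠ x + b • (y - x) := fun h =>
    hab (smul_left_injective ℝ (sub_ne_zero.2 hxy.symm) (add_left_cancel h))
  obtain rfl : β = 1 - α := by linarith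
  convert hf.2 (hmem a ha) (hmem b hb) hne hα hβ hαβ using 2
  module

theorem StrictConvexOn.lt_sub_of_tendsto_slope_Ioi {E : Type*} [AddCommGroup E] [Module ℝ E]
    {s : Set E} {f : E → ℝ} (hf : StrictConvexOn ℝ s f) {x y : E} (hx : x ∈ s) (hy : y ∈ s)
    (hxy : x ≠ y) {d : ℝ}
    (hd : Tendsto (fun t : ℝ => (f (x + t • (y - x)) - f x) / t) (𝓝[>] 0) (𝓝 d)) :
    d < f y - f x := by
  have hderiv : HasDerivWithinAt (fun t : ℝ => f (x + t • (y - x))) d (Set.Ioi 0) 0 := by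
    rw [hasDerivWithinAt_iff_tendsto_slope' Set.self_notMem_Ioi]
    convert hd using 2 with t
    simp [slope_def_field]
  simpa [slope_def_field] using
    (hf.comp_add_smul_sub hx hy hxy).lt_slope_of_hasDerivWithinAt_Ioi (by simp) (by simp)
      zero_lt_one hderiv

section Bregman

variable {H : Type*} [NormedAddCommGroup H] [InnerProductSpace ℝ H] (f : H → ℝ) (g : H → H)

def bregmanDiv (y x : H) : ℝ := f y - f x - inner ℝ (y - x) (g x)

@[simp]
theorem bregmanDiv_self (x : H) : bregmanDiv f g x x = 0 := by
  simp [bregmanDiv]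

variable {f g}

theorem bregmanDiv_pos {D : Set H} (hf : StrictConvexOn ℝ D f) {x y : H} (hx : x ∈ D)
    (hy : y ∈ D) (hxy : y ≠ x)
    (hgx : ∀ v : H, Tendsto (fun t : ℝ => (f (x + t • v) - f x) / t) (𝓝[≠] 0)
      (𝓝 (inner ℝ v (g x)))) :
    0 < bregmanDiv f g y x := by
  have := hf.lt_sub_of_tendsto_slope_Ioi hx hy hxy.symm
    ((hgx (y - x)).mono_left (nhdsWithin_mono _ fun _ ht => ne_of_gt ht))
  unfold bregmanDiv
  linarith

theorem bregmanDiv_le_iff_inner_le (u v w : H) :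
    bregmanDiv f g u w ≤ bregmanDiv f g u v ↔
      inner ℝ (g v - g w) u ≤ f w - f v + inner ℝ v (g v) - inner ℝ w (g w) := by
  simp only [bregmanDiv, inner_sub_left, inner_sub_right, real_inner_comm u]
  constructor <;> intro h <;> linarith

theorem isClosed_setOf_bregmanDiv_le (v w : H) :
    IsClosed {u | bregmanDiv f g u w ≤ bregmanDiv f g u v} := by
  simp only [bregmanDiv_le_iff_inner_le]
  exact isClosed_le (continuous_const.inner continuous_id) continuous_const

theorem convex_setOf_bregmanDiv_le (v w : H) :
    Convex ℝ {u | bregmanDiv f g u w ≤ bregmanDiv f g u v} := by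
  simp only [bregmanDiv_le_iff_inner_le]
  exact convex_halfSpace_le (innerₗ H (g v - g w)).isLinear _

end Bregman

theorem fixedPointSet_closed_convex_of_quasiNonexpansive_general
    {H : Type*} [NormedAddCommGroup H] [InnerProductSpace ℝ H]
    (D : Set H)
    (f : H → ℝ) (g : H → H)
    (hsc : StrictConvexOn ℝ D f)
    (hgat : ∀ x ∈ interior D, ∀ v : H,
      Tendsto (fun t : ℝ => (f (x + t • v) - f x) / t) (𝓝[≠] (0 : ℝ))
        (𝓝 (inner ℝ v (g x) : ℝ)))
    (Df : H → H → ℝ)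
    (hDf : ∀ y x : H, Df y x = f y - f x - inner ℝ (y - x) (g x))
    (A : Set H) (hAcl : IsClosed A) (hAcx : Convex ℝ A)
    (hAD : A ⊆ interior D)
    (S : H → H) (hS : Set.MapsTo S A A)
    (hqne : ∀ v ∈ {v ∈ A | S v = v}, ∀ x ∈ A, Df v (S x) ≤ Df v x) :
    IsClosed {v ∈ A | S v = v} ∧ Convex ℝ {v ∈ A | S v = v} ∧
      {v ∈ A | S v = v} ⊆ A := by
  obtain rfl : Df = bregmanDiv f g := funext₂ hDf
  set F := {v ∈ A | S v = v}
  have hF : F = A ∩ closedConvexHull ℝ F := by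
    refine subset_antisymm (fun v hv => ⟨hv.1, subset_closedConvexHull hv⟩) ?_
    rintro v ⟨hvA, hv⟩
    have hle : bregmanDiv f g v (S v) ≤ bregmanDiv f g v v :=
      closedConvexHull_min (fun u hu => hqne u hu v hvA) (convex_setOf_bregmanDiv_le v (S v))
        (isClosed_setOf_bregmanDiv_le v (S v)) hv
    refine ⟨hvA, by_contra fun hne => ?_⟩
    have hSv := hAD (hS hvA)
    exact (bregmanDiv_pos hsc (interior_subset hSv) (interior_subset (hAD hvA)) (Ne.symm hne)
      (hgat _ hSv)).not_ge (by simpa using hle)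
  refine ⟨?_, ?_, fun v hv => hv.1⟩
  · rw [hF]; exact hAcl.inter isClosed_closedConvexHull
  · rw [hF]; exact hAcx.inter convex_closedConvexHull

/-- Theorem 3.4: if `S : A → A` is quasi-nonexpansive relative to the Bregman distance of a
strictly convex Gâteaux differentiable function (its fixed point set is nonempty and
`D_f(v, Sx) ≤ D_f(v, x)` for every fixed point `v` and every `x ∈ A`), with `A` a nonempty
closed convex subset of the interior of `D`, then the fixed point set
`F(S) = {v ∈ A | S v = v}` is a closed and convex subset of `A`. -/
theorem fixedPointSet_closed_convex_of_quasiNonexpansive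
    {H : Type*} [NormedAddCommGroup H] [InnerProductSpace ℝ H] [CompleteSpace H]
    (D : Set H) (hD : Convex ℝ D) (hDint : (interior D).Nonempty)
    (f : H → ℝ) (g : H → H)
    (hsc : StrictConvexOn ℝ D f)
    (hgat : ∀ x ∈ interior D, ∀ v : H,
      Tendsto (fun t : ℝ => (f (x + t • v) - f x) / t) (𝓝[≠] (0 : ℝ))
        (𝓝 (inner ℝ v (g x) : ℝ)))
    (Df : H → H → ℝ)
    (hDf : ∀ y x : H, Df y x = f y - f x - inner ℝ (y - x) (g x))
    (A : Set H) (hAne : A.Nonempty) (hAcl : IsClosed A) (hAcx : Convex ℝ A)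
    (hAD : A ⊆ interior D)
    (S : H → H) (hS : Set.MapsTo S A A)
    (hFne : ({v ∈ A | S v = v}).Nonempty)
    (hqne : ∀ v ∈ {v ∈ A | S v = v}, ∀ x ∈ A, Df v (S x) ≤ Df v x) :
    IsClosed {v ∈ A | S v = v} ∧ Convex ℝ {v ∈ A | S v = v} ∧
      {v ∈ A | S v = v} ⊆ A :=
  fixedPointSet_closed_convex_of_quasiNonexpansive_general D f g hsc hgat Df hDf A hAcl hAcx hAD S
    hS hqne
end
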